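/- Let G be a countable group acting pointwise periodically by bounded linear operators on a Banach space X (i.e., every vector has finite orbit). If the action is such that the set of elements acting trivially is normal (which it always is), then the action is periodic: some finite-index subgroup of G fixes every vector. -/

import Mathlib

/-!
The fixed set of an element of `G` that acts nontrivially is a proper closed subspace of `X`,
hence nowhere dense, and there are only countably many such sets. By the Baire category theorem some vector `x`
lies outside all of them, so every element of its stabilizer acts trivially. The stabilizer of
`x` has finite index because the orbit of `x` is finite.
-/

open MulAction

theorem MulAction.finiteIndex_stabilizer_of_finite_orbit {G X : Type*} [Group G] [MulAction G X]
    {x : X} (hx : (orbit G x).Finite) : (stabilizer G x).FiniteIndex :=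
  Subgroup.finiteIndex_iff.2 <| by
    rw [index_stabilizer]
    exact Set.ncard_ne_zero_of_mem (mem_orbit_self x) hx

theorem MulAction.fixedBy_eq_univ_of_nonempty_interior (𝕜 : Type*) {G X : Type*}
    [NontriviallyNormedField 𝕜] [AddCommGroup X] [TopologicalSpace X] [ContinuousAdd X]
    [Module 𝕜 X] [ContinuousSMul 𝕜 X] [Monoid G] [MulAction G X] {g : G}
    (hg : IsLinearMap 𝕜 fun x : X => g • x) (h : (interior (fixedBy X g)).Nonempty) :
    fixedBy X g = Set.univ := by
  have hfix : fixedBy X g = (LinearMap.eqLocus (hg.mk' _) LinearMap.id : Set X) := rfl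
  rw [hfix, (LinearMap.eqLocus _ _).eq_top_of_nonempty_interior' (hfix ▸ h), Submodule.top_coe]

theorem MulAction.exists_stabilizer_acts_trivially {G X : Type*} [Group G] [Countable G]
    [TopologicalSpace X] [BaireSpace X] [Nonempty X] [MulAction G X]
    (hclosed : ∀ g : G, IsClosed (fixedBy X g))
    (hinterior : ∀ g : G, (interior (fixedBy X g)).Nonempty → fixedBy X g = Set.univ) :
    ∃ x : X, ∀ g ∈ stabilizer G x, fixedBy X g = Set.univ := by
  let S := {g : G // fixedBy X g ≠ Set.univ}
  have hdense : ∀ g : S, Dense (fixedBy X (g : G))ᶜ := fun g => by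
    rw [← interior_eq_empty_iff_dense_compl, ← Set.not_nonempty_iff_eq_empty]
    exact fun h => g.2 (hinterior g h)
  obtain ⟨x, hx⟩ :=
    (dense_iInter_of_isOpen (fun g : S => (hclosed g).isOpen_compl) hdense).nonempty
  exact ⟨x, fun g hg => by_contra fun hg' => Set.mem_iInter.1 hx ⟨g, hg'⟩ hg⟩

theorem stmt_18 {G X : Type*} [Group G] [Countable G]
    [NormedAddCommGroup X] [NormedSpace ℝ X] [CompleteSpace X]
    [MulAction G X]
    (hlin : ∀ g : G, IsBoundedLinearMap ℝ fun x : X => g • x)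
    (hpp : ∀ x : X, (MulAction.orbit G x).Finite) :
    ∃ H : Subgroup G, H.FiniteIndex ∧ ∀ h ∈ H, ∀ x : X, h • x = x := by
  obtain ⟨x, hx⟩ := exists_stabilizer_acts_trivially
    (fun g => isClosed_eq (hlin g).continuous continuous_id)
    (fun g => fixedBy_eq_univ_of_nonempty_interior ℝ (hlin g).toIsLinearMap)
  exact ⟨stabilizer G x, finiteIndex_stabilizer_of_finite_orbit (hpp x),
    fun h hh => Set.eq_univ_iff_forall.1 (hx h hh)⟩
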